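/- Let ρ₀, ρ₁ be density matrices on ℂ^d. Then max over POVMs {M₀, M₁} (i.e., M₀, M₁ positive semidefinite with M₀ + M₁ = I) of ½Tr(M₀ρ₀) + ½Tr(M₁ρ₁) equals ½(1 + ‖ρ₀ − ρ₁‖₁/2). -/

import Mathlib

open Matrix ComplexOrder

def IsDensityMatrix {d : ℕ} (ρ : Matrix (Fin d) (Fin d) ℂ) : Prop :=
  ρ.PosSemidef ∧ ρ.trace = 1

noncomputable def traceNorm {d : ℕ} (A : Matrix (Fin d) (Fin d) ℂ) : ℝ :=
  (((Matrix.posSemidef_conjTranspose_mul_self A).1.eigenvectorUnitary : Matrix (Fin d) (Fin d) ℂ) *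
    diagonal (((↑) : ℝ → ℂ) ∘ (√·) ∘ (Matrix.posSemidef_conjTranspose_mul_self A).1.eigenvalues) *
    (star (Matrix.posSemidef_conjTranspose_mul_self A).1.eigenvectorUnitary :
      Matrix (Fin d) (Fin d) ℂ)).trace.re

section Helpers

variable {d : ℕ}

/-- Diagonal entries of a PSD matrix have nonnegative real part and zero imaginary part. -/
lemma psd_diag_entry {N : Matrix (Fin d) (Fin d) ℂ} (hN : N.PosSemidef) (i : Fin d) :
    0 ≤ (N i i).re ∧ (N i i).im = 0 := by
  have h := hN.dotProduct_mulVec_nonneg (Pi.single i 1)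
  have heq : star (Pi.single i 1) ⬝ᵥ N *ᵥ Pi.single i 1 = N i i := by
    simp [dotProduct, Matrix.mulVec, Pi.single_apply, Finset.sum_ite_eq,
      Pi.star_apply, apply_ite]
  rw [heq, Complex.le_def] at h
  simpa using ⟨h.1, h.2.symm⟩

variable {A : Matrix (Fin d) (Fin d) ℂ} (hA : A.IsHermitian)

lemma trace_unitary_conj (v : Fin d → ℂ) :
    ((hA.eigenvectorUnitary : Matrix (Fin d) (Fin d) ℂ) * diagonal v *
      star (hA.eigenvectorUnitary : Matrix (Fin d) (Fin d) ℂ)).trace = ∑ i, v i := by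
  rw [Matrix.trace_mul_cycle,
    (Matrix.mem_unitaryGroup_iff').mp hA.eigenvectorUnitary.2, one_mul, trace_diagonal]

lemma mul_unitary_conj (v w : Fin d → ℂ) :
    ((hA.eigenvectorUnitary : Matrix (Fin d) (Fin d) ℂ) * diagonal v *
      star (hA.eigenvectorUnitary : Matrix (Fin d) (Fin d) ℂ)) *
    ((hA.eigenvectorUnitary : Matrix (Fin d) (Fin d) ℂ) * diagonal w *
      star (hA.eigenvectorUnitary : Matrix (Fin d) (Fin d) ℂ)) =
    (hA.eigenvectorUnitary : Matrix (Fin d) (Fin d) ℂ) * diagonal (fun i => v i * w i) *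
      star (hA.eigenvectorUnitary : Matrix (Fin d) (Fin d) ℂ) := by
  have h1 : star (hA.eigenvectorUnitary : Matrix (Fin d) (Fin d) ℂ) *
      (hA.eigenvectorUnitary : Matrix (Fin d) (Fin d) ℂ) = 1 :=
    (Matrix.mem_unitaryGroup_iff').mp hA.eigenvectorUnitary.2
  rw [← diagonal_mul_diagonal]
  simp only [Matrix.mul_assoc]
  rw [← Matrix.mul_assoc (star _) _ _, h1, one_mul]

lemma psd_unitary_conj (v : Fin d → ℝ) (hv : ∀ i, 0 ≤ v i) :
    (((hA.eigenvectorUnitary : Matrix (Fin d) (Fin d) ℂ) * diagonal (fun i => (v i : ℂ)) *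
      star (hA.eigenvectorUnitary : Matrix (Fin d) (Fin d) ℂ))).PosSemidef := by
  rw [Matrix.star_eq_conjTranspose]
  refine (Matrix.PosSemidef.diagonal ?_).mul_mul_conjTranspose_same _
  intro i
  show (0:ℂ) ≤ (v i : ℂ)
  exact_mod_cast hv i

end Helpers

/-- Holevo–Helstrom theorem for binary state discrimination with equal priors:
the optimal success probability over two-outcome POVMs is `½(1 + ‖ρ₀ − ρ₁‖₁/2)`. -/
theorem holevo_helstrom {d : ℕ} (ρ₀ ρ₁ : Matrix (Fin d) (Fin d) ℂ)
    (h₀ : IsDensityMatrix ρ₀) (h₁ : IsDensityMatrix ρ₁) :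
    IsGreatest
      { p : ℝ | ∃ M₀ M₁ : Matrix (Fin d) (Fin d) ℂ,
          M₀.PosSemidef ∧ M₁.PosSemidef ∧ M₀ + M₁ = 1 ∧
          p = (1 / 2) * (M₀ * ρ₀).trace.re + (1 / 2) * (M₁ * ρ₁).trace.re }
      ((1 / 2) * (1 + traceNorm (ρ₀ - ρ₁) / 2)) := by
  obtain ⟨hρ₀, ht₀⟩ := h₀
  obtain ⟨hρ₁, ht₁⟩ := h₁
  have hΔ : (ρ₀ - ρ₁).IsHermitian := hρ₀.1.sub hρ₁.1
  set U : Matrix (Fin d) (Fin d) ℂ := (hΔ.eigenvectorUnitary : Matrix (Fin d) (Fin d) ℂ)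
    with hU
  set lam : Fin d → ℝ := hΔ.eigenvalues with hlam
  have hspec : ρ₀ - ρ₁ = U * diagonal (fun i => (lam i : ℂ)) * star U := by
    have := hΔ.spectral_theorem
    rw [Unitary.conjStarAlgAut_apply] at this
    exact this
  -- sum of eigenvalues is zero
  have htrΔ : (ρ₀ - ρ₁).trace = 0 := by rw [trace_sub, ht₀, ht₁, sub_self]
  have hsum0 : ∑ i, lam i = 0 := by
    have h1 : (ρ₀ - ρ₁).trace = ∑ i, (lam i : ℂ) := by
      rw [hspec]; exact trace_unitary_conj hΔ _
    rw [htrΔ] at h1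
    have : ((∑ i, lam i : ℝ) : ℂ) = 0 := by push_cast; rw [← h1]
    exact_mod_cast this
  -- trace norm equals sum of absolute values of eigenvalues
  have hTN : traceNorm (ρ₀ - ρ₁) = ∑ i, |lam i| := by
    have hSpsd : ((U * diagonal (fun i => ((|lam i| : ℝ) : ℂ)) * star U)).PosSemidef :=
      psd_unitary_conj hΔ _ (fun i => abs_nonneg _)
    have hSsq : (U * diagonal (fun i => ((|lam i| : ℝ) : ℂ)) * star U) ^ 2 =
        (ρ₀ - ρ₁)ᴴ * (ρ₀ - ρ₁) := by
      rw [pow_two, mul_unitary_conj hΔ, hΔ.eq]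
      conv_rhs => rw [hspec]
      rw [mul_unitary_conj hΔ]
      have : (fun i => ((|lam i| : ℝ) : ℂ) * ((|lam i| : ℝ) : ℂ)) =
          fun i => ((lam i : ℝ) : ℂ) * ((lam i : ℝ) : ℂ) := by
        funext i
        rw [← Complex.ofReal_mul, ← Complex.ofReal_mul, abs_mul_abs_self]
      rw [this]
    have hsqrt : (U * diagonal (fun i => ((|lam i| : ℝ) : ℂ)) * star U) =
        (posSemidef_conjTranspose_mul_self (ρ₀ - ρ₁)).1.cfc Real.sqrt := by
      open scoped MatrixOrder in
      rw [← IsHermitian.cfc_eq, ← CFC.sqrt_unique (a := (ρ₀ - ρ₁)ᴴ * (ρ₀ - ρ₁))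
        (b := U * diagonal (fun i => ((|lam i| : ℝ) : ℂ)) * star U)
        (by rw [← pow_two]; exact hSsq) hSpsd.nonneg, CFC.sqrt_eq_cfc,
        cfc_nnreal_eq_real _ _ (posSemidef_conjTranspose_mul_self (ρ₀ - ρ₁)).nonneg]
      congr 1
      funext x
      rw [Real.sqrt]
    show ((posSemidef_conjTranspose_mul_self (ρ₀ - ρ₁)).1.cfc Real.sqrt).trace.re = _
    rw [← hsqrt, trace_unitary_conj hΔ]
    rw [Complex.re_sum]
    simp
  -- reduction of the success probability
  have key : ∀ M₀ M₁ : Matrix (Fin d) (Fin d) ℂ, M₀ + M₁ = 1 →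
      (1 / 2) * (M₀ * ρ₀).trace.re + (1 / 2) * (M₁ * ρ₁).trace.re =
        (1 / 2) * (1 + (M₀ * (ρ₀ - ρ₁)).trace.re) := by
    intro M₀ M₁ hsum
    have hM₁ : M₁ = 1 - M₀ := eq_sub_of_add_eq' hsum
    have h1 : (M₀ * ρ₀).trace + (M₁ * ρ₁).trace = 1 + (M₀ * (ρ₀ - ρ₁)).trace := by
      rw [hM₁, Matrix.sub_mul, Matrix.mul_sub, trace_sub, trace_sub, Matrix.one_mul, ht₁]
      ring
    have := congrArg Complex.re h1
    simp only [Complex.add_re, Complex.one_re] at this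
    linarith
  constructor
  · -- membership: the Helstrom measurement
    set χ : Fin d → ℝ := fun i => if 0 < lam i then 1 else 0 with hχ
    have hsum01 : (U * diagonal (fun i => ((χ i : ℝ) : ℂ)) * star U) +
        (U * diagonal (fun i => ((1 - χ i : ℝ) : ℂ)) * star U) = 1 := by
      have hUU : U * star U = 1 := (Matrix.mem_unitaryGroup_iff).mp hΔ.eigenvectorUnitary.2
      rw [← Matrix.add_mul, ← Matrix.mul_add, diagonal_add]
      have h2 : (fun i => ((χ i : ℝ) : ℂ) + ((1 - χ i : ℝ) : ℂ)) = fun _ => (1 : ℂ) := by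
        funext i; push_cast; ring
      rw [h2]
      have h3 : diagonal (fun _ : Fin d => (1 : ℂ)) = 1 := diagonal_one
      rw [h3, Matrix.mul_one, hUU]
    refine ⟨U * diagonal (fun i => ((χ i : ℝ) : ℂ)) * star U,
            U * diagonal (fun i => ((1 - χ i : ℝ) : ℂ)) * star U, ?_, ?_, hsum01, ?_⟩
    · exact psd_unitary_conj hΔ _ (fun i => by positivity)
    · refine psd_unitary_conj hΔ _ (fun i => ?_)
      simp only [hχ]; split <;> norm_num
    · rw [key _ _ hsum01]
      have htr : ((U * diagonal (fun i => ((χ i : ℝ) : ℂ)) * star U) * (ρ₀ - ρ₁)).trace =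
          ((∑ i, χ i * lam i : ℝ) : ℂ) := by
        rw [hspec, mul_unitary_conj hΔ, trace_unitary_conj hΔ]
        push_cast
        rfl
      rw [htr]
      have hval : ∑ i, χ i * lam i = traceNorm (ρ₀ - ρ₁) / 2 := by
        rw [hTN]
        have hterm : ∀ i, χ i * lam i = (|lam i| + lam i) / 2 := by
          intro i
          simp only [hχ]
          rcases le_or_gt (lam i) 0 with h | h
          · rw [if_neg (not_lt.mpr h), abs_of_nonpos h]; ring
          · rw [if_pos h, abs_of_pos h]; ring
        rw [Finset.sum_congr rfl (fun i _ => hterm i), ← Finset.sum_div,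
          Finset.sum_add_distrib, hsum0]
        ring
      rw [Complex.ofReal_re, hval]
  · -- upper bound
    rintro p ⟨M₀, M₁, hM₀, hM₁, hsum, rfl⟩
    rw [key _ _ hsum]
    have hN : (star U * M₀ * U).PosSemidef := by
      rw [Matrix.star_eq_conjTranspose]; exact hM₀.conjTranspose_mul_mul_same U
    have hN' : (star U * M₁ * U).PosSemidef := by
      rw [Matrix.star_eq_conjTranspose]; exact hM₁.conjTranspose_mul_mul_same U
    have hNN' : star U * M₀ * U + star U * M₁ * U = 1 := by
      rw [← Matrix.add_mul, ← Matrix.mul_add, hsum, Matrix.mul_one]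
      exact (Matrix.mem_unitaryGroup_iff').mp hΔ.eigenvectorUnitary.2
    have htr : (M₀ * (ρ₀ - ρ₁)).trace =
        ((star U * M₀ * U) * diagonal (fun i => (lam i : ℂ))).trace := by
      rw [hspec, ← Matrix.mul_assoc, ← Matrix.mul_assoc, Matrix.trace_mul_cycle,
        ← Matrix.mul_assoc]
    have htr2 : ((star U * M₀ * U) * diagonal (fun i => (lam i : ℂ))).trace =
        ∑ i, (star U * M₀ * U) i i * (lam i : ℂ) := by
      simp [Matrix.trace, Matrix.diag, Matrix.mul_diagonal]
    have hre : (M₀ * (ρ₀ - ρ₁)).trace.re = ∑ i, ((star U * M₀ * U) i i).re * lam i := by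
      rw [htr, htr2, Complex.re_sum]
      congr 1; funext i
      rw [Complex.mul_re, Complex.ofReal_re, Complex.ofReal_im, mul_zero, sub_zero]
    rw [hre]
    have hbd : ∑ i, ((star U * M₀ * U) i i).re * lam i ≤ traceNorm (ρ₀ - ρ₁) / 2 := by
      rw [hTN]
      have hle : ∀ i, ((star U * M₀ * U) i i).re * lam i ≤ (|lam i| + lam i) / 2 := by
        intro i
        have h0 := (psd_diag_entry hN i).1
        have h1 : ((star U * M₀ * U) i i).re ≤ 1 := by
          have h0' := (psd_diag_entry hN' i).1
          have : (star U * M₀ * U) i i + (star U * M₁ * U) i i = 1 := by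
            have := congrFun (congrFun hNN' i) i
            simpa using this
          have := congrArg Complex.re this
          simp only [Complex.add_re, Complex.one_re] at this
          linarith
        rcases le_or_gt 0 (lam i) with h | h
        · rw [abs_of_nonneg h]
          nlinarith
        · rw [abs_of_neg h]
          nlinarith
      calc ∑ i, ((star U * M₀ * U) i i).re * lam i ≤ ∑ i, (|lam i| + lam i) / 2 :=
            Finset.sum_le_sum (fun i _ => hle i)
        _ = (∑ i, |lam i|) / 2 := by
            rw [← Finset.sum_div, Finset.sum_add_distrib, hsum0]; ring
    linarith
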